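/- arXiv:2601.16917 — 4 statements merged into one kernel-verified Lean document; each statement's English description precedes it below -/
import Mathlib

section
/- (Doubling construction.) Let A be a finite cap set in the projective space PG(n,3). Then there exists a cap set in AG(n+1,3) of size 2·|A|. -/
/-- A cap set in `AG(n,3)`: no three distinct points sum to zero. -/
def IsCap {n : ℕ} (C : Set (Fin n → ZMod 3)) : Prop :=
  ∀ a ∈ C, ∀ b ∈ C, ∀ c ∈ C, a ≠ b → a ≠ c → b ≠ c → a + b + c ≠ 0

/-- A complete cap set: a cap set that cannot be extended by any new point. -/
def IsCompleteCap {n : ℕ} (C : Set (Fin n → ZMod 3)) : Prop :=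
  IsCap C ∧ ∀ x ∉ C, ¬ IsCap (insert x C)

/-- `x(0)`: the set of coordinates where `x` vanishes. -/
def zeroSet {n : ℕ} (x : Fin n → ZMod 3) : Set (Fin n) := {i | x i = 0}

/-- `X(x)`: the set of points with the same zero set as `x`. -/
def Xset {n : ℕ} (x : Fin n → ZMod 3) : Set (Fin n → ZMod 3) :=
  {a | zeroSet a = zeroSet x}

/-- `B_n`: all points with no zero coordinates. -/
def Bset (n : ℕ) : Set (Fin n → ZMod 3) := {a | ∀ i, a i ≠ 0}

/-- A `P_n`-set. -/
def IsPSet {n : ℕ} (A : Set (Fin n → ZMod 3)) : Prop :=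
  (∀ a ∈ A, ∀ b ∈ A, a ≠ b → ∃ i, a i = 0 ∧ b i = 0) ∧
  (∀ a ∈ A, ∀ b ∈ A, ∀ c ∈ A, a ≠ b → a ≠ c → b ≠ c → a + b + c ≠ 0)

/-- A complete `P_n`-set: it cannot be extended by a new point to a `P_n`-set. -/
def IsCompletePSet {n : ℕ} (A : Set (Fin n → ZMod 3)) : Prop :=
  IsPSet A ∧ ∀ x ∉ A, ¬ IsPSet (insert x A)

/-- A `b`-saturated set: `X(α) ⊆ A` for every `α ∈ A`. -/
def IsBSaturated {n : ℕ} (A : Set (Fin n → ZMod 3)) : Prop :=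
  ∀ a ∈ A, Xset a ⊆ A

/-- Concatenation (product) of sets of points. -/
def concat {n m : ℕ} (A : Set (Fin n → ZMod 3)) (B : Set (Fin m → ZMod 3)) :
    Set (Fin (n + m) → ZMod 3) :=
  {x | ∃ a ∈ A, ∃ b ∈ B, x = Fin.append a b}

open scoped LinearAlgebra.Projectivization

lemma rep_injective' {n : ℕ} : Function.Injective
    (Projectivization.rep : ℙ (ZMod 3) (Fin (n + 1) → ZMod 3) → _) := by
  intro a b h
  rw [← a.mk_rep, ← b.mk_rep]
  congr 1

lemma rep_ne_neg_rep {n : ℕ} (a b : ℙ (ZMod 3) (Fin (n + 1) → ZMod 3)) :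
    a.rep ≠ -b.rep := by
  intro h
  have h1 : a = b := by
    rw [← a.mk_rep, ← b.mk_rep]
    exact (Projectivization.mk_eq_mk_iff _ _ _ _ _).mpr ⟨-1, by simp [← h]⟩
  subst h1
  have h2 : a.rep + a.rep = 0 := by nth_rewrite 2 [h]; simp
  have h3 : (2 : ZMod 3) • a.rep = 0 := by rw [two_smul]; exact h2
  have := (smul_eq_zero.mp h3).resolve_left (by decide)
  exact a.rep_nonzero this


/-- A cap set in `PG(n,3)`: for any three distinct points, representing vectors
are linearly independent (i.e. no three points are collinear). -/
def IsProjCap {n : ℕ} (A : Set (ℙ (ZMod 3) (Fin (n + 1) → ZMod 3))) : Prop :=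
  ∀ a ∈ A, ∀ b ∈ A, ∀ c ∈ A, a ≠ b → a ≠ c → b ≠ c →
    LinearIndependent (ZMod 3) ![a.rep, b.rep, c.rep]

/-- Doubling construction: a finite cap set `A` in `PG(n,3)` yields a cap set
in `AG(n+1,3)` of size `2 * |A|`. -/
theorem doubling_construction (n : ℕ) (A : Set (ℙ (ZMod 3) (Fin (n + 1) → ZMod 3)))
    (hfin : A.Finite) (hA : IsProjCap A) :
    ∃ C : Set (Fin (n + 1) → ZMod 3), IsCap C ∧ C.ncard = 2 * A.ncard := by
  classical
  refine ⟨(Projectivization.rep '' A) ∪ ((fun p => -p.rep) '' A), ?_, ?_⟩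
  · -- cap property
    have hmem : ∀ x ∈ (Projectivization.rep '' A) ∪ ((fun p => -p.rep) '' A),
        ∃ p ∈ A, ∃ ε : ZMod 3, (ε = 1 ∨ ε = -1) ∧ x = ε • p.rep := by
      rintro x (⟨p, hp, rfl⟩ | ⟨p, hp, rfl⟩)
      · exact ⟨p, hp, 1, Or.inl rfl, (one_smul _ _).symm⟩
      · exact ⟨p, hp, -1, Or.inr rfl, (neg_one_smul _ _).symm⟩
    intro x hx y hy z hz hxy hxz hyz hsum
    obtain ⟨a, ha, ε₁, hε₁, rfl⟩ := hmem x hx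
    obtain ⟨b, hb, ε₂, hε₂, rfl⟩ := hmem y hy
    obtain ⟨c, hc, ε₃, hε₃, rfl⟩ := hmem z hz
    have εne : ∀ ε : ZMod 3, (ε = 1 ∨ ε = -1) → ε ≠ 0 := by decide
    have key : ∀ (p q : ℙ (ZMod 3) (Fin (n + 1) → ZMod 3)) (δ₁ δ₂ δ₃ : ZMod 3),
        (δ₁ = 1 ∨ δ₁ = -1) → (δ₂ = 1 ∨ δ₂ = -1) → (δ₃ = 1 ∨ δ₃ = -1) →
        δ₁ • p.rep ≠ δ₂ • p.rep → δ₁ • p.rep + δ₂ • p.rep + δ₃ • q.rep ≠ 0 := by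
      intro p q δ₁ δ₂ δ₃ h1 h2 h3 hne heq
      have hδ : δ₁ ≠ δ₂ := by rintro rfl; exact hne rfl
      have hδ0 : δ₁ + δ₂ = 0 := by
        rcases h1 with rfl | rfl <;> rcases h2 with rfl | rfl <;> first | rfl | simp at hδ 
      have : δ₃ • q.rep = 0 := by
        have := heq
        rwa [← add_smul, hδ0, zero_smul, zero_add] at this
      rcases smul_eq_zero.mp this with h | h
      · exact εne δ₃ h3 h
      · exact q.rep_nonzero h
    by_cases hab : a = b
    · subst hab; exact key a c ε₁ ε₂ ε₃ hε₁ hε₂ hε₃ hxy hsum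
    by_cases hac : a = c
    · subst hac
      have : ε₁ • a.rep + ε₃ • a.rep + ε₂ • b.rep = 0 := by
        rw [← hsum]; ring
      exact key a b ε₁ ε₃ ε₂ hε₁ hε₃ hε₂ hxz this
    by_cases hbc : b = c
    · subst hbc
      have : ε₂ • b.rep + ε₃ • b.rep + ε₁ • a.rep = 0 := by
        rw [← hsum]; ring
      exact key b a ε₂ ε₃ ε₁ hε₂ hε₃ hε₁ hyz this
    · have li := hA a ha b hb c hc hab hac hbc
      have := Fintype.linearIndependent_iff.mp li ![ε₁, ε₂, ε₃] (by
        rw [Fin.sum_univ_three]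
        simpa using hsum) 0
      simp at this
      exact εne ε₁ hε₁ this
  · -- cardinality
    have hdisj : Disjoint (Projectivization.rep '' A) ((fun p => -p.rep) '' A) := by
      rw [Set.disjoint_left]
      rintro x ⟨p, hp, rfl⟩ ⟨q, hq, hx⟩
      exact rep_ne_neg_rep p q hx.symm
    rw [Set.ncard_union_eq hdisj (hfin.image _) (hfin.image _),
      Set.ncard_image_of_injective _ rep_injective',
      Set.ncard_image_of_injective _ (fun a b h => rep_injective' (neg_injective h)),
      two_mul]
end

section
/- («Three» construction.) Let n_1, n_2, n_3 be positive natural numbers and let P_{n_1} ⊆ AG(n_1,3), P_{n_2} ⊆ AG(n_2,3), P_{n_3} ⊆ AG(n_3,3) be complete, b-saturated P-sets. Then the set P_{n_1}P_{n_2}B_{n_3} ∪ P_{n_1}B_{n_2}P_{n_3} ∪ B_{n_1}P_{n_2}P_{n_3} is a complete, b-saturated P-set in AG(n_1+n_2+n_3, 3). -/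
namespace TC

abbrev V (n : ℕ) := Fin n → ZMod 3

lemma z3_self (t : ZMod 3) : t + t + t = 0 := by revert t; decide

lemma z3_zzz : ∀ u v w : ZMod 3, u = 0 → v = 0 → u + v + w = 0 → w = 0 := by decide

lemma z3_allB : ∀ u v w : ZMod 3, u ≠ 0 → v ≠ 0 → w ≠ 0 → u + v + w = 0 → v = u ∧ w = u := by
  decide

lemma z3_twoeq1 : ∀ u w : ZMod 3, u + u + w = 0 → w = u := by decide
lemma z3_twoeq2 : ∀ u v : ZMod 3, u + v + u = 0 → v = u := by decide
lemma z3_twoeq3 : ∀ u v : ZMod 3, u + v + v = 0 → u = v := by decide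

section append
variable {m n : ℕ}

lemma cast_or_nat (i : Fin (m + n)) :
    (∃ j, i = Fin.castAdd n j) ∨ (∃ j, i = Fin.natAdd m j) :=
  Fin.addCases (fun j => Or.inl ⟨j, rfl⟩) (fun j => Or.inr ⟨j, rfl⟩) i

lemma append_add (a a' : V m) (b b' : V n) :
    Fin.append a b + Fin.append a' b' = Fin.append (a + a') (b + b') := by
  funext i
  rcases cast_or_nat i with ⟨j, rfl⟩ | ⟨j, rfl⟩ <;>
    simp [Fin.append_left, Fin.append_right]

lemma append_zero : (Fin.append (0 : V m) (0 : V n)) = 0 := by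
  funext i
  rcases cast_or_nat i with ⟨j, rfl⟩ | ⟨j, rfl⟩ <;>
    simp [Fin.append_left, Fin.append_right]

lemma append_inj {a a' : V m} {b b' : V n} (h : Fin.append a b = Fin.append a' b') :
    a = a' ∧ b = b' := by
  constructor
  · funext j; have := congrFun h (Fin.castAdd n j); simpa [Fin.append_left] using this
  · funext j; have := congrFun h (Fin.natAdd m j); simpa [Fin.append_right] using this

lemma exists_append (x : V (m + n)) : ∃ a b, x = Fin.append a b := by
  refine ⟨fun j => x (Fin.castAdd n j), fun j => x (Fin.natAdd m j), ?_⟩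
  funext i
  rcases cast_or_nat i with ⟨j, rfl⟩ | ⟨j, rfl⟩ <;>
    simp [Fin.append_left, Fin.append_right]

lemma append_shared {a a' : V m} {b b' : V n} :
    (∃ i, Fin.append a b i = 0 ∧ Fin.append a' b' i = 0) ↔
      (∃ i, a i = 0 ∧ a' i = 0) ∨ (∃ i, b i = 0 ∧ b' i = 0) := by
  constructor
  · rintro ⟨i, hi1, hi2⟩
    rcases cast_or_nat i with ⟨j, rfl⟩ | ⟨j, rfl⟩
    · left; exact ⟨j, by simpa [Fin.append_left] using hi1, by simpa [Fin.append_left] using hi2⟩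
    · right; exact ⟨j, by simpa [Fin.append_right] using hi1, by simpa [Fin.append_right] using hi2⟩
  · rintro (⟨j, hj1, hj2⟩ | ⟨j, hj1, hj2⟩)
    · exact ⟨Fin.castAdd n j, by simpa [Fin.append_left], by simpa [Fin.append_left]⟩
    · exact ⟨Fin.natAdd m j, by simpa [Fin.append_right], by simpa [Fin.append_right]⟩

lemma zeroSet_append {a a' : V m} {b b' : V n} :
    zeroSet (Fin.append a b) = zeroSet (Fin.append a' b') ↔
      (zeroSet a = zeroSet a' ∧ zeroSet b = zeroSet b') := by
  simp only [Set.ext_iff, zeroSet, Set.mem_setOf_eq]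
  constructor
  · intro h
    constructor
    · intro j; simpa [Fin.append_left] using h (Fin.castAdd n j)
    · intro j; simpa [Fin.append_right] using h (Fin.natAdd m j)
  · rintro ⟨h1, h2⟩ i
    rcases cast_or_nat i with ⟨j, rfl⟩ | ⟨j, rfl⟩
    · simpa [Fin.append_left] using h1 j
    · simpa [Fin.append_right] using h2 j

end append
section P
variable {n : ℕ} {P : Set (V n)}

lemma P_nonempty (hP : IsCompletePSet P) : P.Nonempty := by
  rcases Set.eq_empty_or_nonempty P with rfl | h
  · exfalso
    apply hP.2 0 (Set.notMem_empty 0)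
    constructor
    · intro a ha b hb hab
      simp only [Set.mem_insert_iff, Set.mem_empty_iff_false, or_false] at ha hb
      exact absurd (ha.trans hb.symm) hab
    · intro a ha b hb c hc hab hac hbc
      simp only [Set.mem_insert_iff, Set.mem_empty_iff_false, or_false] at ha hb
      exact absurd (ha.trans hb.symm) hab
  · exact h

lemma mem_has_zero (hn : 0 < n) (hP : IsCompletePSet P) (hPb : IsBSaturated P)
    {p : V n} (hp : p ∈ P) : ∃ i, p i = 0 := by
  by_contra h
  push_neg at h
  have hz : zeroSet p = (∅ : Set (Fin n)) := by
    ext i; simp [zeroSet, h i]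
  have h1 : (fun _ => (1 : ZMod 3) : V n) ∈ P := by
    apply hPb p hp
    show zeroSet _ = zeroSet p
    rw [hz]; ext i; simp [zeroSet]
  have h2 : (fun _ => (2 : ZMod 3) : V n) ∈ P := by
    apply hPb p hp
    show zeroSet _ = zeroSet p
    rw [hz]; ext i
    simp only [zeroSet, Set.mem_setOf_eq, Set.mem_empty_iff_false, iff_false]
    decide
  have hne : (fun _ => (1 : ZMod 3) : V n) ≠ (fun _ => (2 : ZMod 3)) := by
    intro he
    have := congrFun he ⟨0, hn⟩
    exact absurd this (by decide)
  obtain ⟨i, e1, e2⟩ := hP.1.1 _ h1 _ h2 hne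
  exact one_ne_zero e1

lemma share_P (hn : 0 < n) (hP : IsCompletePSet P) (hPb : IsBSaturated P)
    {u v : V n} (hu : u ∈ P) (hv : v ∈ P) : ∃ i, u i = 0 ∧ v i = 0 := by
  by_cases h : u = v
  · subst h; obtain ⟨i, hi⟩ := mem_has_zero hn hP hPb hu; exact ⟨i, hi, hi⟩
  · exact hP.1.1 u hu v hv h

lemma z3_allB' : ∀ u v w : ZMod 3, u ≠ 0 → v ≠ 0 → w ≠ 0 → u + v + w = 0 → v = u ∧ w = u := by
  decide

lemma twoP_B (hn : 0 < n) (hP : IsCompletePSet P) (hPb : IsBSaturated P)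
    {u v w : V n} (hu : u ∈ P) (hv : v ∈ P) (hw : ∀ i, w i ≠ 0)
    (hs : u + v + w = 0) : False := by
  obtain ⟨i, e1, e2⟩ := share_P hn hP hPb hu hv
  exact hw i (z3_zzz _ _ _ e1 e2 (congrFun hs i))

lemma allP (hP : IsPSet P) {u v w : V n} (hu : u ∈ P) (hv : v ∈ P) (hw : w ∈ P)
    (hs : u + v + w = 0) : v = u ∧ w = u := by
  by_cases huv : u = v
  · subst huv
    exact ⟨rfl, funext fun i => z3_twoeq1 _ _ (congrFun hs i)⟩
  · by_cases huw : u = w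
    · subst huw
      exact ⟨funext fun i => z3_twoeq2 _ _ (congrFun hs i), rfl⟩
    · by_cases hvw : v = w
      · subst hvw
        exact absurd (funext fun i => z3_twoeq3 _ _ (congrFun hs i) : u = v) huv
      · exact absurd hs (hP.2 u hu v hv w hw huv huw hvw)

lemma allB {u v w : V n} (hu : ∀ i, u i ≠ 0) (hv : ∀ i, v i ≠ 0) (hw : ∀ i, w i ≠ 0)
    (hs : u + v + w = 0) : v = u ∧ w = u :=
  ⟨funext fun i => (z3_allB' _ _ _ (hu i) (hv i) (hw i) (congrFun hs i)).1,
   funext fun i => (z3_allB' _ _ _ (hu i) (hv i) (hw i) (congrFun hs i)).2⟩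

lemma good_of_share (hP : IsCompletePSet P) {x : V n}
    (hsh : ∀ p ∈ P, ∃ i, x i = 0 ∧ p i = 0) :
    ∃ u v, u ∈ P ∧ v ∈ P ∧ x + u + v = 0 ∧ (x ∈ P ∨ (u ≠ v ∧ u ≠ x ∧ v ≠ x)) := by
  by_cases hx : x ∈ P
  · exact ⟨x, x, hx, hx, funext fun i => z3_self _, Or.inl hx⟩
  have hni := hP.2 x hx
  unfold IsPSet at hni
  rw [not_and_or] at hni
  rcases hni with hni | hni
  · exfalso
    push_neg at hni
    obtain ⟨p, hp, q, hq, hpq, hno⟩ := hni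
    rcases Set.mem_insert_iff.1 hp with rfl | hp1
    · rcases Set.mem_insert_iff.1 hq with rfl | hq1
      · exact hpq rfl
      · obtain ⟨i, e1, e2⟩ := hsh q hq1; exact hno i e1 e2
    · rcases Set.mem_insert_iff.1 hq with rfl | hq1
      · obtain ⟨i, e1, e2⟩ := hsh p hp1; exact hno i e2 e1
      · obtain ⟨i, e1, e2⟩ := hP.1.1 p hp1 q hq1 hpq; exact hno i e1 e2
  · push_neg at hni
    obtain ⟨p, hp, q, hq, r, hr, hpq, hpr, hqr, hsum⟩ := hni
    rcases Set.mem_insert_iff.1 hp with rfl | hp1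
    · rcases Set.mem_insert_iff.1 hq with rfl | hq1
      · exact absurd rfl hpq
      rcases Set.mem_insert_iff.1 hr with rfl | hr1
      · exact absurd rfl hpr
      exact ⟨q, r, hq1, hr1, hsum, Or.inr ⟨hqr, Ne.symm hpq, Ne.symm hpr⟩⟩
    rcases Set.mem_insert_iff.1 hq with rfl | hq1
    · rcases Set.mem_insert_iff.1 hr with rfl | hr1
      · exact absurd rfl hqr
      exact ⟨p, r, hp1, hr1, by linear_combination hsum, Or.inr ⟨hpr, hpq, Ne.symm hqr⟩⟩
    rcases Set.mem_insert_iff.1 hr with rfl | hr1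
    · exact ⟨p, q, hp1, hq1, by linear_combination hsum, Or.inr ⟨hpq, hpr, hqr⟩⟩
    · exact absurd hsum (hP.1.2 p hp1 q hq1 r hr1 hpq hpr hqr)

lemma notBad_good (hn : 0 < n) (hP : IsCompletePSet P) (hPb : IsBSaturated P) (w : V n)
    (h : ¬ ∃ p ∈ P, ∀ i, ¬(w i = 0 ∧ p i = 0)) :
    (∃ i, w i = 0) ∧
      ∃ u v, u ∈ P ∧ v ∈ P ∧ w + u + v = 0 ∧ (w ∈ P ∨ (u ≠ v ∧ u ≠ w ∧ v ≠ w)) := by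
  push_neg at h
  have hsh : ∀ p ∈ P, ∃ i, w i = 0 ∧ p i = 0 := h
  constructor
  · obtain ⟨p, hp⟩ := P_nonempty hP
    obtain ⟨i, e1, _⟩ := hsh p hp
    exact ⟨i, e1⟩
  · exact good_of_share hP hsh

lemma exists_B_pair (c : V n) :
    ∃ γ γ' : V n, (∀ i, γ i ≠ 0) ∧ (∀ i, γ' i ≠ 0) ∧ c + γ + γ' = 0 ∧
      ((∃ i, c i = 0) → γ ≠ γ') := by
  refine ⟨fun i => if c i = 0 then 1 else c i, fun i => if c i = 0 then 2 else c i,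
    fun i => ?_, fun i => ?_, funext fun i => ?_, ?_⟩
  · show (if c i = 0 then (1 : ZMod 3) else c i) ≠ 0
    by_cases h : c i = 0
    · rw [if_pos h]; decide
    · rw [if_neg h]; exact h
  · show (if c i = 0 then (2 : ZMod 3) else c i) ≠ 0
    by_cases h : c i = 0
    · rw [if_pos h]; decide
    · rw [if_neg h]; exact h
  · show c i + (if c i = 0 then (1 : ZMod 3) else c i) + (if c i = 0 then (2 : ZMod 3) else c i) = 0
    by_cases h : c i = 0
    · rw [if_pos h, if_pos h, h]; decide
    · rw [if_neg h, if_neg h]; exact z3_self _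
  · rintro ⟨i, hi⟩ hne
    have h2 : (if c i = 0 then (1 : ZMod 3) else c i) = (if c i = 0 then (2 : ZMod 3) else c i) :=
      congrFun hne i
    rw [if_pos hi, if_pos hi] at h2
    exact absurd h2 (by decide)

end P

section app3
variable {n1 n2 n3 : ℕ}

def app3 (a : V n1) (b : V n2) (c : V n3) : V (n1 + n2 + n3) :=
  Fin.append (Fin.append a b) c

lemma app3_add (a a' : V n1) (b b' : V n2) (c c' : V n3) :
    app3 a b c + app3 a' b' c' = app3 (a + a') (b + b') (c + c') := by
  unfold app3
  rw [append_add, append_add]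

lemma app3_zero : app3 (0 : V n1) (0 : V n2) (0 : V n3) = 0 := by
  unfold app3
  rw [append_zero, append_zero]

lemma app3_inj {a a' : V n1} {b b' : V n2} {c c' : V n3}
    (h : app3 a b c = app3 a' b' c') : a = a' ∧ b = b' ∧ c = c' := by
  obtain ⟨h1, h2⟩ := append_inj h
  obtain ⟨h3, h4⟩ := append_inj h1
  exact ⟨h3, h4, h2⟩

lemma exists_app3 (x : V (n1 + n2 + n3)) : ∃ a b c, x = app3 a b c := by
  obtain ⟨y, c, rfl⟩ := exists_append x
  obtain ⟨a, b, rfl⟩ := exists_append y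
  exact ⟨a, b, c, rfl⟩

lemma app3_shared {a a' : V n1} {b b' : V n2} {c c' : V n3} :
    (∃ i, app3 a b c i = 0 ∧ app3 a' b' c' i = 0) ↔
      (∃ i, a i = 0 ∧ a' i = 0) ∨ (∃ i, b i = 0 ∧ b' i = 0) ∨ (∃ i, c i = 0 ∧ c' i = 0) := by
  unfold app3
  rw [append_shared, append_shared, or_assoc]

lemma app3_zeroSet {a a' : V n1} {b b' : V n2} {c c' : V n3} :
    zeroSet (app3 a b c) = zeroSet (app3 a' b' c') ↔
      (zeroSet a = zeroSet a' ∧ zeroSet b = zeroSet b' ∧ zeroSet c = zeroSet c') := by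
  unfold app3
  rw [zeroSet_append, zeroSet_append, and_assoc]

end app3

section main
variable {n1 n2 n3 : ℕ} {P1 : Set (V n1)} {P2 : Set (V n2)} {P3 : Set (V n3)}

lemma mem_concat3_iff {A : Set (V n1)} {B : Set (V n2)} {C : Set (V n3)} {x : V (n1 + n2 + n3)} :
    x ∈ concat (concat A B) C ↔ ∃ a ∈ A, ∃ b ∈ B, ∃ c ∈ C, x = app3 a b c := by
  constructor
  · rintro ⟨y, ⟨a, ha, b, hb, rfl⟩, c, hc, rfl⟩
    exact ⟨a, ha, b, hb, c, hc, rfl⟩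
  · rintro ⟨a, ha, b, hb, c, hc, rfl⟩
    exact ⟨_, ⟨a, ha, b, hb, rfl⟩, c, hc, rfl⟩

lemma memU_iff {x : V (n1 + n2 + n3)} :
    x ∈ (concat (concat P1 P2) (Bset n3) ∪ concat (concat P1 (Bset n2)) P3 ∪
          concat (concat (Bset n1) P2) P3) ↔
    ∃ a b c, x = app3 a b c ∧
      ((a ∈ P1 ∧ b ∈ P2 ∧ ∀ i, c i ≠ 0) ∨ (a ∈ P1 ∧ (∀ i, b i ≠ 0) ∧ c ∈ P3) ∨
       ((∀ i, a i ≠ 0) ∧ b ∈ P2 ∧ c ∈ P3)) := by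
  rw [Set.mem_union, Set.mem_union, mem_concat3_iff, mem_concat3_iff, mem_concat3_iff]
  constructor
  · rintro ((⟨a, ha, b, hb, c, hc, rfl⟩ | ⟨a, ha, b, hb, c, hc, rfl⟩) | ⟨a, ha, b, hb, c, hc, rfl⟩)
    · exact ⟨a, b, c, rfl, Or.inl ⟨ha, hb, hc⟩⟩
    · exact ⟨a, b, c, rfl, Or.inr (Or.inl ⟨ha, hb, hc⟩)⟩
    · exact ⟨a, b, c, rfl, Or.inr (Or.inr ⟨ha, hb, hc⟩)⟩
  · rintro ⟨a, b, c, rfl, (⟨ha, hb, hc⟩ | ⟨ha, hb, hc⟩ | ⟨ha, hb, hc⟩)⟩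
    · exact Or.inl (Or.inl ⟨a, ha, b, hb, c, hc, rfl⟩)
    · exact Or.inl (Or.inr ⟨a, ha, b, hb, c, hc, rfl⟩)
    · exact Or.inr ⟨a, ha, b, hb, c, hc, rfl⟩

end main

section theU
variable {n1 n2 n3 : ℕ} {P1 : Set (V n1)} {P2 : Set (V n2)} {P3 : Set (V n3)}

lemma B_of_zs {n : ℕ} {c c' : V n} (hc : ∀ i, c i ≠ 0) (e : zeroSet c' = zeroSet c) :
    ∀ i, c' i ≠ 0 := fun i hi => hc i (by have : i ∈ zeroSet c' := hi; rwa [e] at this)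

lemma U_isPSet (h1 : 0 < n1) (h2 : 0 < n2) (h3 : 0 < n3)
    (hP1 : IsCompletePSet P1) (hP1b : IsBSaturated P1)
    (hP2 : IsCompletePSet P2) (hP2b : IsBSaturated P2)
    (hP3 : IsCompletePSet P3) (hP3b : IsBSaturated P3) :
    IsPSet (concat (concat P1 P2) (Bset n3) ∪ concat (concat P1 (Bset n2)) P3 ∪
            concat (concat (Bset n1) P2) P3) := by
  constructor
  · intro x hx y hy hxy
    rw [memU_iff] at hx hy
    obtain ⟨a, b, c, rfl, hx⟩ := hx
    obtain ⟨a', b', c', rfl, hy⟩ := hy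
    rw [app3_shared]
    rcases hx with ⟨hxa, hxb, hxc⟩ | ⟨hxa, hxb, hxc⟩ | ⟨hxa, hxb, hxc⟩ <;>
      rcases hy with ⟨hya, hyb, hyc⟩ | ⟨hya, hyb, hyc⟩ | ⟨hya, hyb, hyc⟩ <;>
      first
        | exact Or.inl (share_P h1 hP1 hP1b hxa hya)
        | exact Or.inr (Or.inl (share_P h2 hP2 hP2b hxb hyb))
        | exact Or.inr (Or.inr (share_P h3 hP3 hP3b hxc hyc))
  · intro x hx y hy z hz hxy hxz hyz hsum
    rw [memU_iff] at hx hy hz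
    obtain ⟨a, b, c, rfl, hx⟩ := hx
    obtain ⟨a', b', c', rfl, hy⟩ := hy
    obtain ⟨a'', b'', c'', rfl, hz⟩ := hz
    rw [app3_add, app3_add] at hsum
    obtain ⟨s1, s2, s3⟩ := app3_inj (hsum.trans app3_zero.symm)
    rcases hx with ⟨hxa, hxb, hxc⟩ | ⟨hxa, hxb, hxc⟩ | ⟨hxa, hxb, hxc⟩ <;>
      rcases hy with ⟨hya, hyb, hyc⟩ | ⟨hya, hyb, hyc⟩ | ⟨hya, hyb, hyc⟩ <;>
      rcases hz with ⟨hza, hzb, hzc⟩ | ⟨hza, hzb, hzc⟩ | ⟨hza, hzb, hzc⟩ <;>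
      first
        | exact twoP_B h1 hP1 hP1b hxa hya hza s1
        | exact twoP_B h1 hP1 hP1b hxa hza hya (by linear_combination s1)
        | exact twoP_B h1 hP1 hP1b hya hza hxa (by linear_combination s1)
        | exact twoP_B h2 hP2 hP2b hxb hyb hzb s2
        | exact twoP_B h2 hP2 hP2b hxb hzb hyb (by linear_combination s2)
        | exact twoP_B h2 hP2 hP2b hyb hzb hxb (by linear_combination s2)
        | exact twoP_B h3 hP3 hP3b hxc hyc hzc s3
        | exact twoP_B h3 hP3 hP3b hxc hzc hyc (by linear_combination s3)
        | exact twoP_B h3 hP3 hP3b hyc hzc hxc (by linear_combination s3)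
        | exact hxy (by rw [(allP hP1.1 hxa hya hza s1).1, (allP hP2.1 hxb hyb hzb s2).1,
            (allB hxc hyc hzc s3).1])
        | exact hxy (by rw [(allP hP1.1 hxa hya hza s1).1, (allB hxb hyb hzb s2).1,
            (allP hP3.1 hxc hyc hzc s3).1])
        | exact hxy (by rw [(allB hxa hya hza s1).1, (allP hP2.1 hxb hyb hzb s2).1,
            (allP hP3.1 hxc hyc hzc s3).1])

lemma U_bsat (hP1 : IsCompletePSet P1) (hP1b : IsBSaturated P1)
    (hP2 : IsCompletePSet P2) (hP2b : IsBSaturated P2)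
    (hP3 : IsCompletePSet P3) (hP3b : IsBSaturated P3) :
    IsBSaturated (concat (concat P1 P2) (Bset n3) ∪ concat (concat P1 (Bset n2)) P3 ∪
            concat (concat (Bset n1) P2) P3) := by
  intro x hx y hy
  rw [memU_iff] at hx ⊢
  obtain ⟨a, b, c, rfl, hx⟩ := hx
  obtain ⟨a', b', c', rfl⟩ := exists_app3 y
  obtain ⟨e1, e2, e3⟩ := app3_zeroSet.1 (hy : zeroSet _ = zeroSet _)
  refine ⟨a', b', c', rfl, ?_⟩
  rcases hx with ⟨ha, hb, hc⟩ | ⟨ha, hb, hc⟩ | ⟨ha, hb, hc⟩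
  · exact Or.inl ⟨hP1b a ha e1, hP2b b hb e2, B_of_zs hc e3⟩
  · exact Or.inr (Or.inl ⟨hP1b a ha e1, B_of_zs hb e2, hP3b c hc e3⟩)
  · exact Or.inr (Or.inr ⟨B_of_zs ha e1, hP2b b hb e2, hP3b c hc e3⟩)

end theU

section theU2
variable {n1 n2 n3 : ℕ} {P1 : Set (V n1)} {P2 : Set (V n2)} {P3 : Set (V n3)}

lemma U_not_extend (h1 : 0 < n1) (h2 : 0 < n2) (h3 : 0 < n3)
    (hP1 : IsCompletePSet P1) (hP1b : IsBSaturated P1)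
    (hP2 : IsCompletePSet P2) (hP2b : IsBSaturated P2)
    (hP3 : IsCompletePSet P3) (hP3b : IsBSaturated P3) :
    ∀ x ∉ (concat (concat P1 P2) (Bset n3) ∪ concat (concat P1 (Bset n2)) P3 ∪
            concat (concat (Bset n1) P2) P3),
      ¬ IsPSet (insert x (concat (concat P1 P2) (Bset n3) ∪ concat (concat P1 (Bset n2)) P3 ∪
            concat (concat (Bset n1) P2) P3)) := by
  intro x hxU hI
  obtain ⟨a, b, c, rfl⟩ := exists_app3 x
  have ones1 : ∀ i : Fin n1, (fun _ => (1 : ZMod 3) : V n1) i ≠ 0 := fun _ => (by decide : (1 : ZMod 3) ≠ 0)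
  have ones2 : ∀ i : Fin n2, (fun _ => (1 : ZMod 3) : V n2) i ≠ 0 := fun _ => (by decide : (1 : ZMod 3) ≠ 0)
  have ones3 : ∀ i : Fin n3, (fun _ => (1 : ZMod 3) : V n3) i ≠ 0 := fun _ => (by decide : (1 : ZMod 3) ≠ 0)
  -- no two slots can both be "bad"
  have key12 : ¬ ((∃ p ∈ P1, ∀ i, ¬(a i = 0 ∧ p i = 0)) ∧
      (∃ q ∈ P2, ∀ i, ¬(b i = 0 ∧ q i = 0))) := by
    rintro ⟨⟨p, hp, hpn⟩, ⟨q, hq, hqn⟩⟩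
    have hyU := (memU_iff (P1:=P1) (P2:=P2) (P3:=P3)).2 ⟨p, q, _, rfl, Or.inl ⟨hp, hq, ones3⟩⟩
    have hne : app3 a b c ≠ app3 p q (fun _ => (1 : ZMod 3)) := by
      intro he
      obtain ⟨i, hi⟩ := mem_has_zero h1 hP1 hP1b hp
      exact hpn i ⟨by rw [(app3_inj he).1]; exact hi, hi⟩
    rcases app3_shared.1 (hI.1 _ (Set.mem_insert _ _) _ (Set.mem_insert_of_mem _ hyU) hne) with
      ⟨j, u1, u2⟩ | ⟨j, u1, u2⟩ | ⟨j, u1, u2⟩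
    · exact hpn j ⟨u1, u2⟩
    · exact hqn j ⟨u1, u2⟩
    · exact ones3 j u2
  have key13 : ¬ ((∃ p ∈ P1, ∀ i, ¬(a i = 0 ∧ p i = 0)) ∧
      (∃ r ∈ P3, ∀ i, ¬(c i = 0 ∧ r i = 0))) := by
    rintro ⟨⟨p, hp, hpn⟩, ⟨r, hr, hrn⟩⟩
    have hyU := (memU_iff (P1:=P1) (P2:=P2) (P3:=P3)).2 ⟨p, _, r, rfl, Or.inr (Or.inl ⟨hp, ones2, hr⟩)⟩
    have hne : app3 a b c ≠ app3 p (fun _ => (1 : ZMod 3)) r := by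
      intro he
      obtain ⟨i, hi⟩ := mem_has_zero h1 hP1 hP1b hp
      exact hpn i ⟨by rw [(app3_inj he).1]; exact hi, hi⟩
    rcases app3_shared.1 (hI.1 _ (Set.mem_insert _ _) _ (Set.mem_insert_of_mem _ hyU) hne) with
      ⟨j, u1, u2⟩ | ⟨j, u1, u2⟩ | ⟨j, u1, u2⟩
    · exact hpn j ⟨u1, u2⟩
    · exact ones2 j u2
    · exact hrn j ⟨u1, u2⟩
  have key23 : ¬ ((∃ q ∈ P2, ∀ i, ¬(b i = 0 ∧ q i = 0)) ∧
      (∃ r ∈ P3, ∀ i, ¬(c i = 0 ∧ r i = 0))) := by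
    rintro ⟨⟨q, hq, hqn⟩, ⟨r, hr, hrn⟩⟩
    have hyU := (memU_iff (P1:=P1) (P2:=P2) (P3:=P3)).2 ⟨_, q, r, rfl, Or.inr (Or.inr ⟨ones1, hq, hr⟩)⟩
    have hne : app3 a b c ≠ app3 (fun _ => (1 : ZMod 3)) q r := by
      intro he
      obtain ⟨i, hi⟩ := mem_has_zero h2 hP2 hP2b hq
      exact hqn i ⟨by rw [(app3_inj he).2.1]; exact hi, hi⟩
    rcases app3_shared.1 (hI.1 _ (Set.mem_insert _ _) _ (Set.mem_insert_of_mem _ hyU) hne) with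
      ⟨j, u1, u2⟩ | ⟨j, u1, u2⟩ | ⟨j, u1, u2⟩
    · exact ones1 j u2
    · exact hqn j ⟨u1, u2⟩
    · exact hrn j ⟨u1, u2⟩
  by_cases bad1 : ∃ p ∈ P1, ∀ i, ¬(a i = 0 ∧ p i = 0)
  · -- slots 2 and 3 are not bad; build two type-3 points
    have nb2 : ¬ ∃ q ∈ P2, ∀ i, ¬(b i = 0 ∧ q i = 0) := fun hb => key12 ⟨bad1, hb⟩
    have nb3 : ¬ ∃ r ∈ P3, ∀ i, ¬(c i = 0 ∧ r i = 0) := fun hc => key13 ⟨bad1, hc⟩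
    obtain ⟨hb0, u2, v2, hu2, hv2, hs2, hd2⟩ := notBad_good h2 hP2 hP2b b nb2
    obtain ⟨hc0, u3, v3, hu3, hv3, hs3, hd3⟩ := notBad_good h3 hP3 hP3b c nb3
    obtain ⟨α, α', hα, hα', hs1, hαne⟩ := exists_B_pair a
    have hyU := (memU_iff (P1:=P1) (P2:=P2) (P3:=P3)).2 ⟨α, u2, u3, rfl, Or.inr (Or.inr ⟨hα, hu2, hu3⟩)⟩
    have hzU := (memU_iff (P1:=P1) (P2:=P2) (P3:=P3)).2 ⟨α', v2, v3, rfl, Or.inr (Or.inr ⟨hα', hv2, hv3⟩)⟩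
    have hsum : app3 a b c + app3 α u2 u3 + app3 α' v2 v3 = 0 := by
      rw [app3_add, app3_add, hs1, hs2, hs3, app3_zero]
    have finish : app3 a b c ≠ app3 α u2 u3 → app3 a b c ≠ app3 α' v2 v3 →
        app3 α u2 u3 ≠ app3 α' v2 v3 → False := fun d1 d2 d3 =>
      hI.2 _ (Set.mem_insert _ _) _ (Set.mem_insert_of_mem _ hyU)
        _ (Set.mem_insert_of_mem _ hzU) d1 d2 d3 hsum
    by_cases ha0 : ∃ i, a i = 0
    · obtain ⟨i0, hi0⟩ := ha0
      refine finish ?_ ?_ ?_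
      · intro he; exact hα i0 (by rw [← (app3_inj he).1]; exact hi0)
      · intro he; exact hα' i0 (by rw [← (app3_inj he).1]; exact hi0)
      · intro he; exact hαne ⟨i0, hi0⟩ (app3_inj he).1
    · push_neg at ha0
      rcases hd2 with hbP | hd2
      · rcases hd3 with hcP | hd3
        · exact hxU (memU_iff.2 ⟨a, b, c, rfl, Or.inr (Or.inr ⟨ha0, hbP, hcP⟩)⟩)
        · refine finish ?_ ?_ ?_
          · intro he; exact hd3.2.1 (app3_inj he).2.2.symm
          · intro he; exact hd3.2.2 (app3_inj he).2.2.symm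
          · intro he; exact hd3.1 (app3_inj he).2.2
      · refine finish ?_ ?_ ?_
        · intro he; exact hd2.2.1 (app3_inj he).2.1.symm
        · intro he; exact hd2.2.2 (app3_inj he).2.1.symm
        · intro he; exact hd2.1 (app3_inj he).2.1
  · by_cases bad2 : ∃ q ∈ P2, ∀ i, ¬(b i = 0 ∧ q i = 0)
    · -- slots 1 and 3 are not bad; build two type-2 points
      have nb3 : ¬ ∃ r ∈ P3, ∀ i, ¬(c i = 0 ∧ r i = 0) := fun hc => key23 ⟨bad2, hc⟩
      obtain ⟨ha0, u1, v1, hu1, hv1, hs1, hd1⟩ := notBad_good h1 hP1 hP1b a bad1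
      obtain ⟨hc0, u3, v3, hu3, hv3, hs3, hd3⟩ := notBad_good h3 hP3 hP3b c nb3
      obtain ⟨β, β', hβ, hβ', hs2, hβne⟩ := exists_B_pair b
      have hyU := (memU_iff (P1:=P1) (P2:=P2) (P3:=P3)).2 ⟨u1, β, u3, rfl, Or.inr (Or.inl ⟨hu1, hβ, hu3⟩)⟩
      have hzU := (memU_iff (P1:=P1) (P2:=P2) (P3:=P3)).2 ⟨v1, β', v3, rfl, Or.inr (Or.inl ⟨hv1, hβ', hv3⟩)⟩
      have hsum : app3 a b c + app3 u1 β u3 + app3 v1 β' v3 = 0 := by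
        rw [app3_add, app3_add, hs1, hs2, hs3, app3_zero]
      have finish : app3 a b c ≠ app3 u1 β u3 → app3 a b c ≠ app3 v1 β' v3 →
          app3 u1 β u3 ≠ app3 v1 β' v3 → False := fun d1 d2 d3 =>
        hI.2 _ (Set.mem_insert _ _) _ (Set.mem_insert_of_mem _ hyU)
          _ (Set.mem_insert_of_mem _ hzU) d1 d2 d3 hsum
      by_cases hb0 : ∃ i, b i = 0
      · obtain ⟨i0, hi0⟩ := hb0
        refine finish ?_ ?_ ?_
        · intro he; exact hβ i0 (by rw [← (app3_inj he).2.1]; exact hi0)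
        · intro he; exact hβ' i0 (by rw [← (app3_inj he).2.1]; exact hi0)
        · intro he; exact hβne ⟨i0, hi0⟩ (app3_inj he).2.1
      · push_neg at hb0
        rcases hd1 with haP | hd1
        · rcases hd3 with hcP | hd3
          · exact hxU (memU_iff.2 ⟨a, b, c, rfl, Or.inr (Or.inl ⟨haP, hb0, hcP⟩)⟩)
          · refine finish ?_ ?_ ?_
            · intro he; exact hd3.2.1 (app3_inj he).2.2.symm
            · intro he; exact hd3.2.2 (app3_inj he).2.2.symm
            · intro he; exact hd3.1 (app3_inj he).2.2
        · refine finish ?_ ?_ ?_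
          · intro he; exact hd1.2.1 (app3_inj he).1.symm
          · intro he; exact hd1.2.2 (app3_inj he).1.symm
          · intro he; exact hd1.1 (app3_inj he).1
    · -- slots 1 and 2 are not bad; build two type-1 points
      obtain ⟨ha0, u1, v1, hu1, hv1, hs1, hd1⟩ := notBad_good h1 hP1 hP1b a bad1
      obtain ⟨hb0, u2, v2, hu2, hv2, hs2, hd2⟩ := notBad_good h2 hP2 hP2b b bad2
      obtain ⟨γ, γ', hγ, hγ', hs3, hγne⟩ := exists_B_pair c
      have hyU := (memU_iff (P1:=P1) (P2:=P2) (P3:=P3)).2 ⟨u1, u2, γ, rfl, Or.inl ⟨hu1, hu2, hγ⟩⟩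
      have hzU := (memU_iff (P1:=P1) (P2:=P2) (P3:=P3)).2 ⟨v1, v2, γ', rfl, Or.inl ⟨hv1, hv2, hγ'⟩⟩
      have hsum : app3 a b c + app3 u1 u2 γ + app3 v1 v2 γ' = 0 := by
        rw [app3_add, app3_add, hs1, hs2, hs3, app3_zero]
      have finish : app3 a b c ≠ app3 u1 u2 γ → app3 a b c ≠ app3 v1 v2 γ' →
          app3 u1 u2 γ ≠ app3 v1 v2 γ' → False := fun d1 d2 d3 =>
        hI.2 _ (Set.mem_insert _ _) _ (Set.mem_insert_of_mem _ hyU)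
          _ (Set.mem_insert_of_mem _ hzU) d1 d2 d3 hsum
      by_cases hc0 : ∃ i, c i = 0
      · obtain ⟨i0, hi0⟩ := hc0
        refine finish ?_ ?_ ?_
        · intro he; exact hγ i0 (by rw [← (app3_inj he).2.2]; exact hi0)
        · intro he; exact hγ' i0 (by rw [← (app3_inj he).2.2]; exact hi0)
        · intro he; exact hγne ⟨i0, hi0⟩ (app3_inj he).2.2
      · push_neg at hc0
        rcases hd1 with haP | hd1
        · rcases hd2 with hbP | hd2
          · exact hxU (memU_iff.2 ⟨a, b, c, rfl, Or.inl ⟨haP, hbP, hc0⟩⟩)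
          · refine finish ?_ ?_ ?_
            · intro he; exact hd2.2.1 (app3_inj he).2.1.symm
            · intro he; exact hd2.2.2 (app3_inj he).2.1.symm
            · intro he; exact hd2.1 (app3_inj he).2.1
        · refine finish ?_ ?_ ?_
          · intro he; exact hd1.2.1 (app3_inj he).1.symm
          · intro he; exact hd1.2.2 (app3_inj he).1.symm
          · intro he; exact hd1.1 (app3_inj he).1

end theU2
end TC
/-- «Three» construction (Theorem E): the combination of complete, `b`-saturated
`P`-sets is a complete, `b`-saturated `P`-set. -/
theorem three_construction (n1 n2 n3 : ℕ) (h1 : 0 < n1) (h2 : 0 < n2) (h3 : 0 < n3)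
    (P1 : Set (Fin n1 → ZMod 3)) (P2 : Set (Fin n2 → ZMod 3)) (P3 : Set (Fin n3 → ZMod 3))
    (hP1 : IsCompletePSet P1) (hP1b : IsBSaturated P1)
    (hP2 : IsCompletePSet P2) (hP2b : IsBSaturated P2)
    (hP3 : IsCompletePSet P3) (hP3b : IsBSaturated P3) :
    IsCompletePSet (concat (concat P1 P2) (Bset n3) ∪
                    concat (concat P1 (Bset n2)) P3 ∪
                    concat (concat (Bset n1) P2) P3) ∧
    IsBSaturated (concat (concat P1 P2) (Bset n3) ∪
                  concat (concat P1 (Bset n2)) P3 ∪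
                  concat (concat (Bset n1) P2) P3) := by
  exact ⟨⟨TC.U_isPSet h1 h2 h3 hP1 hP1b hP2 hP2b hP3 hP3b,
          TC.U_not_extend h1 h2 h3 hP1 hP1b hP2 hP2b hP3 hP3b⟩,
         TC.U_bsat hP1 hP1b hP2 hP2b hP3 hP3b⟩
end

section
/- («Six» construction.) Let n_1, …, n_6 be positive natural numbers and let P_{n_i} ⊆ AG(n_i,3) (i = 1,…,6) be complete, b-saturated P-sets. Form the ten concatenated sets A_1 = P_{n_1}P_{n_2}P_{n_3}B_{n_4}B_{n_5}B_{n_6}, A_2 = P_{n_1}P_{n_2}B_{n_3}B_{n_4}B_{n_5}P_{n_6}, A_3 = P_{n_1}B_{n_2}P_{n_3}B_{n_4}P_{n_5}B_{n_6}, A_4 = B_{n_1}P_{n_2}P_{n_3}P_{n_4}B_{n_5}B_{n_6}, A_5 = B_{n_1}B_{n_2}P_{n_3}P_{n_4}B_{n_5}P_{n_6}, A_6 = B_{n_1}B_{n_2}P_{n_3}B_{n_4}P_{n_5}P_{n_6}, A_7 = B_{n_1}P_{n_2}B_{n_3}P_{n_4}P_{n_5}B_{n_6}, A_8 = B_{n_1}P_{n_2}B_{n_3}B_{n_4}P_{n_5}P_{n_6},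 A_9 = P_{n_1}B_{n_2}B_{n_3}P_{n_4}B_{n_5}P_{n_6}, A_{10} = P_{n_1}B_{n_2}B_{n_3}P_{n_4}P_{n_5}B_{n_6}. Then the union ⋃_{i=1}^{10} A_i is a complete, b-saturated P-set in AG(n_1+⋯+n_6, 3). -/
/-- Six-fold concatenation of point sets. -/
def concat6 {n1 n2 n3 n4 n5 n6 : ℕ}
    (A1 : Set (Fin n1 → ZMod 3)) (A2 : Set (Fin n2 → ZMod 3)) (A3 : Set (Fin n3 → ZMod 3))
    (A4 : Set (Fin n4 → ZMod 3)) (A5 : Set (Fin n5 → ZMod 3)) (A6 : Set (Fin n6 → ZMod 3)) :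
    Set (Fin (n1 + n2 + n3 + n4 + n5 + n6) → ZMod 3) :=
  concat (concat (concat (concat (concat A1 A2) A3) A4) A5) A6

theorem add_add_self_eq_zero_iff {ι : Type*} {a c : ι → ZMod 3} : a + a + c = 0 ↔ c = a := by
  simp only [funext_iff, Pi.add_apply, Pi.zero_apply]
  exact forall_congr' fun i => by
    generalize a i = u; generalize c i = v; revert u v; decide

theorem eq_of_mem_Bset_of_add_add_eq_zero {m : ℕ} {a b c : Fin m → ZMod 3} (ha : a ∈ Bset m)
    (hb : b ∈ Bset m) (hc : c ∈ Bset m) (h : a + b + c = 0) : a = b := by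
  funext i
  have key : ∀ u v w : ZMod 3, u ≠ 0 → v ≠ 0 → w ≠ 0 → u + v + w = 0 → u = v := by decide
  exact key _ _ _ (ha i) (hb i) (hc i) (congrFun h i)

theorem isBSaturated_Bset (m : ℕ) : IsBSaturated (Bset m) := by
  intro a ha b hb i hi
  exact ha i (hb.subset hi)

namespace IsPSet

variable {m : ℕ} {Q : Set (Fin m → ZMod 3)}

theorem eq_of_add_add_eq_zero (hQ : IsPSet Q) {a b c : Fin m → ZMod 3} (ha : a ∈ Q) (hb : b ∈ Q)
    (hc : c ∈ Q) (h : a + b + c = 0) : a = b := by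
  by_contra hab
  by_cases hac : a = c
  · subst hac
    exact hab (add_add_self_eq_zero_iff.1 (by rw [← h]; abel)).symm
  by_cases hbc : b = c
  · subst hbc
    exact hab (add_add_self_eq_zero_iff.1 (by rw [← h]; abel))
  exact hQ.2 a ha b hb c hc hab hac hbc h

/-- In a `b`-saturated `P`-set every point has a zero coordinate: otherwise `α` and `-α` would be
two points of `X(α)` without a common zero. -/
theorem exists_eq_zero (hm : 0 < m) (hQ : IsPSet Q) (hS : IsBSaturated Q) {a : Fin m → ZMod 3}
    (ha : a ∈ Q) : ∃ i, a i = 0 := by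
  by_contra! h
  have hneg : -a ∈ Q := hS a ha (by ext i; simp [zeroSet])
  have hne : a ≠ -a := fun he => by
    have key : ∀ u : ZMod 3, u = -u → u = 0 := by decide
    exact h ⟨0, hm⟩ (key _ (congrFun he ⟨0, hm⟩))
  obtain ⟨i, hi, -⟩ := hQ.1 a ha (-a) hneg hne
  exact h i hi

theorem exists_eq_zero_and_eq_zero (hm : 0 < m) (hQ : IsPSet Q) (hS : IsBSaturated Q)
    {a b : Fin m → ZMod 3} (ha : a ∈ Q) (hb : b ∈ Q) : ∃ i, a i = 0 ∧ b i = 0 := by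
  by_cases hab : a = b
  · obtain ⟨i, hi⟩ := hQ.exists_eq_zero hm hS ha
    exact ⟨i, hi, hab ▸ hi⟩
  · exact hQ.1 a ha b hb hab

theorem add_add_ne_zero_of_mem_Bset (hm : 0 < m) (hQ : IsPSet Q) (hS : IsBSaturated Q)
    {a b c : Fin m → ZMod 3} (ha : a ∈ Q) (hb : b ∈ Q) (hc : c ∈ Bset m) : a + b + c ≠ 0 := by
  intro h
  obtain ⟨i, hai, hbi⟩ := hQ.exists_eq_zero_and_eq_zero hm hS ha hb
  exact hc i (by simpa [hai, hbi] using congrFun h i)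

theorem insert (hQ : IsPSet Q) {y : Fin m → ZMod 3} (hzero : ∀ b ∈ Q, ∃ i, y i = 0 ∧ b i = 0)
    (hsum : ∀ b ∈ Q, ∀ c ∈ Q, b ≠ c → y + b + c ≠ 0) : IsPSet (insert y Q) := by
  refine ⟨?_, ?_⟩
  · rintro a (rfl | ha) b (rfl | hb) hab
    · exact absurd rfl hab
    · exact hzero b hb
    · obtain ⟨i, hyi, hai⟩ := hzero a ha
      exact ⟨i, hai, hyi⟩
    · exact hQ.1 a ha b hb hab
  · rintro a (rfl | ha) b (rfl | hb) c (rfl | hc) hab hac hbc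
    · exact absurd rfl hab
    · exact absurd rfl hab
    · exact absurd rfl hac
    · exact hsum b hb c hc hbc
    · exact absurd rfl hbc
    · exact fun h => hsum a ha c hc hac (by rw [← h]; abel)
    · exact fun h => hsum a ha b hb hab (by rw [← h]; abel)
    · exact hQ.2 a ha b hb c hc hab hac hbc

end IsPSet

def Covers {m : ℕ} (Q : Set (Fin m → ZMod 3)) (y : Fin m → ZMod 3) : Prop :=
  y ∈ Q ∨ ∃ b ∈ Q, ∃ c ∈ Q, b ≠ c ∧ y + b + c = 0

theorem Covers.exists_add_add_eq_zero {m : ℕ} {Q : Set (Fin m → ZMod 3)} {y : Fin m → ZMod 3}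
    (h : Covers Q y) : ∃ b ∈ Q, ∃ c ∈ Q, y + b + c = 0 ∧ (b = c → y ∈ Q) := by
  rcases h with hy | ⟨b, hb, c, hc, hbc, hsum⟩
  · exact ⟨y, hy, y, hy, add_add_self_eq_zero_iff.2 rfl, fun _ => hy⟩
  · exact ⟨b, hb, c, hc, hsum, fun h => absurd h hbc⟩

theorem covers_Bset {m : ℕ} (y : Fin m → ZMod 3) : Covers (Bset m) y := by
  by_cases hy : y ∈ Bset m
  · exact Or.inl hy
  -- at a zero coordinate the completing pair is `(1, 2)`, elsewhere it is `(y i, y i)`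
  obtain ⟨i₀, hi₀⟩ : ∃ i, y i = 0 := by simpa [Bset] using hy
  refine Or.inr ⟨fun i => if y i = 0 then 1 else y i, fun i => ?_,
    fun i => if y i = 0 then 2 else y i, fun i => ?_, fun h => ?_, funext fun i => ?_⟩
  · dsimp only
    split_ifs with h
    exacts [one_ne_zero, h]
  · dsimp only
    split_ifs with h
    exacts [by decide, h]
  · have h12 : (1 : ZMod 3) = 2 := by simpa [hi₀] using congrFun h i₀
    exact absurd h12 (by decide)
  · simp only [Pi.add_apply, Pi.zero_apply]
    split_ifs with h
    · rw [h]; decide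
    · generalize y i = u at h ⊢; revert u; decide

theorem IsCompletePSet.exists_forall_not_and_eq_zero {m : ℕ} {Q : Set (Fin m → ZMod 3)}
    (hQ : IsCompletePSet Q) {y : Fin m → ZMod 3} (hy : ¬Covers Q y) :
    ∃ b ∈ Q, ∀ i, ¬(b i = 0 ∧ y i = 0) := by
  by_contra! h
  refine hQ.2 y (fun hyQ => hy (Or.inl hyQ)) (hQ.1.insert (fun b hb => ?_) ?_)
  · obtain ⟨i, hbi, hyi⟩ := h b hb
    exact ⟨i, hyi, hbi⟩
  · exact fun b hb c hc hbc hsum => hy (Or.inr ⟨b, hb, c, hc, hbc, hsum⟩)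

structure IsGluingPattern {J : Type*} (F : Finset (Finset J)) : Prop where
  intersecting : ∀ s ∈ F, ∀ t ∈ F, ∃ j ∈ s, j ∈ t
  exists_mem_exactly_two : ∀ s ∈ F, ∀ t ∈ F, ∀ u ∈ F, ¬(s = t ∧ t = u) →
    ∃ j, (j ∈ s ∧ j ∈ t ∧ j ∉ u) ∨ (j ∈ s ∧ j ∉ t ∧ j ∈ u) ∨ (j ∉ s ∧ j ∈ t ∧ j ∈ u)
  subset_or_disjoint : ∀ V : Finset J, ∃ s ∈ F, s ⊆ V ∨ Disjoint s V

section Gluing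

variable {J : Type*} {n : J → ℕ} {N : ℕ} (e : (Σ j, Fin (n j)) ≃ Fin N)

def block (x : Fin N → ZMod 3) (j : J) : Fin (n j) → ZMod 3 :=
  fun k => x (e ⟨j, k⟩)

variable {e}

theorem block_injective : Function.Injective (block e) := by
  intro x y h
  funext i
  obtain ⟨⟨j, k⟩, rfl⟩ := e.surjective i
  exact congrFun (congrFun h j) k

theorem exists_block_eq (w : ∀ j, Fin (n j) → ZMod 3) : ∃ x, ∀ j, block e x j = w j :=
  ⟨fun i => Sigma.uncurry w (e.symm i), fun j => funext fun k =>
    congrArg (Sigma.uncurry w) (e.symm_apply_apply ⟨j, k⟩)⟩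

variable (e) [DecidableEq J] (P : ∀ j, Set (Fin (n j) → ZMod 3))

def patternFactor (s : Finset J) (j : J) : Set (Fin (n j) → ZMod 3) :=
  if j ∈ s then P j else Bset (n j)

def patternProduct (s : Finset J) : Set (Fin N → ZMod 3) :=
  {x | ∀ j, block e x j ∈ patternFactor P s j}

def patternUnion (F : Finset (Finset J)) : Set (Fin N → ZMod 3) :=
  ⋃ s ∈ F, patternProduct e P s

variable {e P}

theorem mem_patternUnion {F : Finset (Finset J)} {x : Fin N → ZMod 3} :
    x ∈ patternUnion e P F ↔ ∃ s ∈ F, x ∈ patternProduct e P s := by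
  simp [patternUnion]

theorem patternFactor_of_mem {s : Finset J} {j : J} (h : j ∈ s) : patternFactor P s j = P j :=
  if_pos h

theorem patternFactor_of_notMem {s : Finset J} {j : J} (h : j ∉ s) :
    patternFactor P s j = Bset (n j) :=
  if_neg h

theorem block_mem_of_mem {s : Finset J} {x : Fin N → ZMod 3} (hx : x ∈ patternProduct e P s)
    {j : J} (hj : j ∈ s) : block e x j ∈ P j :=
  patternFactor_of_mem (P := P) hj ▸ hx j

theorem block_mem_Bset_of_notMem {s : Finset J} {x : Fin N → ZMod 3}
    (hx : x ∈ patternProduct e P s) {j : J} (hj : j ∉ s) : block e x j ∈ Bset (n j) :=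
  patternFactor_of_notMem (P := P) hj ▸ hx j

theorem isBSaturated_patternFactor (hS : ∀ j, IsBSaturated (P j)) (s : Finset J) (j : J) :
    IsBSaturated (patternFactor P s j) := by
  unfold patternFactor
  split_ifs
  exacts [hS j, isBSaturated_Bset _]

theorem eq_of_mem_patternFactor_of_add_add_eq_zero (hP : ∀ j, IsPSet (P j)) {s : Finset J} {j : J}
    {a b c : Fin (n j) → ZMod 3} (ha : a ∈ patternFactor P s j) (hb : b ∈ patternFactor P s j)
    (hc : c ∈ patternFactor P s j) (h : a + b + c = 0) : a = b := by
  unfold patternFactor at ha hb hc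
  split_ifs at ha hb hc
  exacts [(hP j).eq_of_add_add_eq_zero ha hb hc h, eq_of_mem_Bset_of_add_add_eq_zero ha hb hc h]

theorem patternUnion_exists_eq_zero_and_eq_zero {F : Finset (Finset J)} (hF : IsGluingPattern F)
    (hn : ∀ j, 0 < n j) (hP : ∀ j, IsPSet (P j)) (hS : ∀ j, IsBSaturated (P j))
    {x y : Fin N → ZMod 3} (hx : x ∈ patternUnion e P F) (hy : y ∈ patternUnion e P F) :
    ∃ i, x i = 0 ∧ y i = 0 := by
  obtain ⟨s, hs, hx⟩ := mem_patternUnion.1 hx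
  obtain ⟨t, ht, hy⟩ := mem_patternUnion.1 hy
  obtain ⟨j, hjs, hjt⟩ := hF.intersecting s hs t ht
  obtain ⟨k, hk⟩ := (hP j).exists_eq_zero_and_eq_zero (hn j) (hS j) (block_mem_of_mem hx hjs)
    (block_mem_of_mem hy hjt)
  exact ⟨e ⟨j, k⟩, hk⟩

theorem patternUnion_add_add_ne_zero {F : Finset (Finset J)} (hF : IsGluingPattern F)
    (hn : ∀ j, 0 < n j) (hP : ∀ j, IsPSet (P j)) (hS : ∀ j, IsBSaturated (P j))
    {x y z : Fin N → ZMod 3} (hx : x ∈ patternUnion e P F) (hy : y ∈ patternUnion e P F)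
    (hz : z ∈ patternUnion e P F) (hxy : x ≠ y) : x + y + z ≠ 0 := by
  intro hsum
  obtain ⟨s, hs, hx⟩ := mem_patternUnion.1 hx
  obtain ⟨t, ht, hy⟩ := mem_patternUnion.1 hy
  obtain ⟨u, hu, hz⟩ := mem_patternUnion.1 hz
  have hsumj : ∀ j, block e x j + block e y j + block e z j = 0 := fun j =>
    congrFun (congrArg (block e) hsum) j
  by_cases hstu : s = t ∧ t = u
  · obtain ⟨rfl, rfl⟩ := hstu
    exact hxy (block_injective (funext fun j =>
      eq_of_mem_patternFactor_of_add_add_eq_zero hP (hx j) (hy j) (hz j) (hsumj j)))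
  obtain ⟨j, ⟨hjs, hjt, hju⟩ | ⟨hjs, hjt, hju⟩ | ⟨hjs, hjt, hju⟩⟩ :=
    hF.exists_mem_exactly_two s hs t ht u hu hstu
  · exact (hP j).add_add_ne_zero_of_mem_Bset (hn j) (hS j) (block_mem_of_mem hx hjs)
      (block_mem_of_mem hy hjt) (block_mem_Bset_of_notMem hz hju) (hsumj j)
  · exact (hP j).add_add_ne_zero_of_mem_Bset (hn j) (hS j) (block_mem_of_mem hx hjs)
      (block_mem_of_mem hz hju) (block_mem_Bset_of_notMem hy hjt)
      (by rw [← hsumj j]; abel)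
  · exact (hP j).add_add_ne_zero_of_mem_Bset (hn j) (hS j) (block_mem_of_mem hy hjt)
      (block_mem_of_mem hz hju) (block_mem_Bset_of_notMem hx hjs)
      (by rw [← hsumj j]; abel)

theorem exists_mem_patternProduct_add_add_eq_zero {s : Finset J} {y : Fin N → ZMod 3}
    (hy : y ∉ patternProduct e P s) (hcov : ∀ j ∈ s, Covers (P j) (block e y j)) :
    ∃ x ∈ patternProduct e P s, ∃ x' ∈ patternProduct e P s, x ≠ x' ∧ y + x + x' = 0 := by
  have hcov' : ∀ j, Covers (patternFactor P s j) (block e y j) := fun j => by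
    by_cases hj : j ∈ s
    · exact patternFactor_of_mem (P := P) hj ▸ hcov j hj
    · exact patternFactor_of_notMem (P := P) hj ▸ covers_Bset _
  choose b hb c hc hsum hyb using fun j => (hcov' j).exists_add_add_eq_zero
  obtain ⟨x, hx⟩ := exists_block_eq (e := e) b
  obtain ⟨x', hx'⟩ := exists_block_eq (e := e) c
  refine ⟨x, fun j => hx j ▸ hb j, x', fun j => hx' j ▸ hc j, fun h => hy fun j => ?_, ?_⟩
  · exact hyb j (by rw [← hx j, ← hx' j, h])
  · refine block_injective (e := e) (funext fun j => ?_)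
    change block e y j + block e x j + block e x' j = 0
    rw [hx, hx']
    exact hsum j

theorem exists_mem_patternProduct_forall_not_and_eq_zero (hP : ∀ j, IsCompletePSet (P j))
    {s : Finset J} {y : Fin N → ZMod 3} (hcov : ∀ j ∈ s, ¬Covers (P j) (block e y j)) :
    ∃ x ∈ patternProduct e P s, ∀ i, ¬(x i = 0 ∧ y i = 0) := by
  have hfar : ∀ j, ∃ b ∈ patternFactor P s j, ∀ k, ¬(b k = 0 ∧ block e y j k = 0) := fun j => by
    by_cases hj : j ∈ s
    · exact patternFactor_of_mem (P := P) hj ▸ (hP j).exists_forall_not_and_eq_zero (hcov j hj)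
    · exact ⟨1, patternFactor_of_notMem (P := P) hj ▸ fun _ => one_ne_zero,
        fun _ h => one_ne_zero h.1⟩
  choose b hb hbz using hfar
  obtain ⟨x, hx⟩ := exists_block_eq (e := e) b
  refine ⟨x, fun j => hx j ▸ hb j, fun i => ?_⟩
  obtain ⟨⟨j, k⟩, rfl⟩ := e.surjective i
  have hbzjk := hbz j k
  rwa [← hx j] at hbzjk

theorem not_isPSet_insert_patternUnion [Fintype J] {F : Finset (Finset J)} (hF : IsGluingPattern F)
    (hP : ∀ j, IsCompletePSet (P j)) {y : Fin N → ZMod 3} (hy : y ∉ patternUnion e P F) :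
    ¬IsPSet (insert y (patternUnion e P F)) := by
  classical
  intro hins
  have hxU {s} (hs : s ∈ F) {x} (hx : x ∈ patternProduct e P s) :
      x ∈ insert y (patternUnion e P F) :=
    Set.mem_insert_of_mem _ (mem_patternUnion.2 ⟨s, hs, hx⟩)
  have hne {s} (hs : s ∈ F) {x} (hx : x ∈ patternProduct e P s) : y ≠ x :=
    fun h => hy (mem_patternUnion.2 ⟨s, hs, h ▸ hx⟩)
  obtain ⟨s, hs, hsV | hsV⟩ :=
    hF.subset_or_disjoint (Finset.univ.filter fun j => Covers (P j) (block e y j))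
  · obtain ⟨x, hx, x', hx', hxx', hsum⟩ := exists_mem_patternProduct_add_add_eq_zero
      (fun h => hy (mem_patternUnion.2 ⟨s, hs, h⟩)) fun j hj => (Finset.mem_filter.1 (hsV hj)).2
    exact hins.2 y (Set.mem_insert _ _) x (hxU hs hx) x' (hxU hs hx') (hne hs hx) (hne hs hx')
      hxx' hsum
  · obtain ⟨x, hx, hxy⟩ := exists_mem_patternProduct_forall_not_and_eq_zero hP
      fun j hj hcov => Finset.disjoint_left.1 hsV hj (Finset.mem_filter.2 ⟨Finset.mem_univ j, hcov⟩)
    obtain ⟨i, hi⟩ := hins.1 x (hxU hs hx) y (Set.mem_insert _ _) (hne hs hx).symm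
    exact hxy i hi

theorem isBSaturated_patternUnion (hS : ∀ j, IsBSaturated (P j)) (F : Finset (Finset J)) :
    IsBSaturated (patternUnion e P F) := by
  intro x hx y hy
  obtain ⟨s, hs, hx⟩ := mem_patternUnion.1 hx
  refine mem_patternUnion.2 ⟨s, hs, fun j => isBSaturated_patternFactor hS s j _ (hx j) ?_⟩
  ext k
  exact Set.ext_iff.1 hy (e ⟨j, k⟩)

theorem isCompletePSet_patternUnion [Fintype J] {F : Finset (Finset J)} (hF : IsGluingPattern F)
    (hn : ∀ j, 0 < n j) (hP : ∀ j, IsCompletePSet (P j)) (hS : ∀ j, IsBSaturated (P j)) :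
    IsCompletePSet (patternUnion e P F) :=
  ⟨⟨fun _ hx _ hy _ => patternUnion_exists_eq_zero_and_eq_zero hF hn (fun j => (hP j).1) hS hx hy,
    fun _ hx _ hy _ hz hxy _ _ =>
      patternUnion_add_add_ne_zero hF hn (fun j => (hP j).1) hS hx hy hz hxy⟩,
    fun _ hy => not_isPSet_insert_patternUnion hF hP hy⟩

end Gluing

theorem mem_concat {n m : ℕ} {A : Set (Fin n → ZMod 3)} {B : Set (Fin m → ZMod 3)}
    {x : Fin (n + m) → ZMod 3} :
    x ∈ concat A B ↔ (fun i => x (Fin.castAdd m i)) ∈ A ∧ (fun i => x (Fin.natAdd n i)) ∈ B := by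
  constructor
  · rintro ⟨a, ha, b, hb, rfl⟩
    simpa using ⟨ha, hb⟩
  · rintro ⟨ha, hb⟩
    exact ⟨_, ha, _, hb, Fin.append_castAdd_natAdd.symm⟩

def sixBlocks (n1 n2 n3 n4 n5 n6 : ℕ) :
    (Σ j, Fin (![n1, n2, n3, n4, n5, n6] j)) ≃ Fin (n1 + n2 + n3 + n4 + n5 + n6) :=
  finSigmaFinEquiv.trans (finCongr (by simp [Fin.sum_univ_six]))

def sixPattern : Finset (Finset (Fin 6)) :=
  {{0, 1, 2}, {0, 1, 5}, {0, 2, 4}, {1, 2, 3}, {2, 3, 5},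
    {2, 4, 5}, {1, 3, 4}, {1, 4, 5}, {0, 3, 5}, {0, 3, 4}}

set_option maxRecDepth 10000 in
theorem isGluingPattern_sixPattern : IsGluingPattern sixPattern :=
  ⟨by decide, by decide, by decide⟩

section Six

variable {n1 n2 n3 n4 n5 n6 : ℕ}

def sixFamily (A1 : Set (Fin n1 → ZMod 3)) (A2 : Set (Fin n2 → ZMod 3))
    (A3 : Set (Fin n3 → ZMod 3)) (A4 : Set (Fin n4 → ZMod 3)) (A5 : Set (Fin n5 → ZMod 3))
    (A6 : Set (Fin n6 → ZMod 3)) : ∀ j, Set (Fin (![n1, n2, n3, n4, n5, n6] j) → ZMod 3) :=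
  Fin.cons A1 <| Fin.cons A2 <| Fin.cons A3 <| Fin.cons A4 <| Fin.cons A5 <| Fin.cons A6 finZeroElim

theorem mem_concat6_iff (A1 : Set (Fin n1 → ZMod 3)) (A2 : Set (Fin n2 → ZMod 3))
    (A3 : Set (Fin n3 → ZMod 3)) (A4 : Set (Fin n4 → ZMod 3)) (A5 : Set (Fin n5 → ZMod 3))
    (A6 : Set (Fin n6 → ZMod 3)) (x : Fin (n1 + n2 + n3 + n4 + n5 + n6) → ZMod 3) :
    x ∈ concat6 A1 A2 A3 A4 A5 A6 ↔
      ∀ j, block (sixBlocks n1 n2 n3 n4 n5 n6) x j ∈ sixFamily A1 A2 A3 A4 A5 A6 j := by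
  simp only [concat6, mem_concat, Fin.forall_fin_succ, IsEmpty.forall_iff, and_true, and_assoc,
    sixFamily]
  -- conjunct by conjunct, the iterated `castAdd`/`natAdd` embedding is `sixBlocks ⟨j, ·⟩`
  refine and_congr ?_ (and_congr ?_ (and_congr ?_ (and_congr ?_ (and_congr ?_ ?_)))) <;>
    refine iff_of_eq (congrArg (· ∈ _) (funext fun k => congrArg x (Fin.ext ?_))) <;>
    simp [sixBlocks, finSigmaFinEquiv_apply, Fin.sum_univ_succ, Nat.add_assoc]

theorem patternFactor_sixFamily (P1 : Set (Fin n1 → ZMod 3)) (P2 : Set (Fin n2 → ZMod 3))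
    (P3 : Set (Fin n3 → ZMod 3)) (P4 : Set (Fin n4 → ZMod 3)) (P5 : Set (Fin n5 → ZMod 3))
    (P6 : Set (Fin n6 → ZMod 3)) (s : Finset (Fin 6)) :
    patternFactor (sixFamily P1 P2 P3 P4 P5 P6) s =
      sixFamily (if 0 ∈ s then P1 else Bset n1) (if 1 ∈ s then P2 else Bset n2)
        (if 2 ∈ s then P3 else Bset n3) (if 3 ∈ s then P4 else Bset n4)
        (if 4 ∈ s then P5 else Bset n5) (if 5 ∈ s then P6 else Bset n6) := by
  funext j
  fin_cases j <;> rfl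

end Six

/-- «Six» construction (Theorem F): the union of the ten combinations is a
complete, `b`-saturated `P`-set. -/
theorem six_construction (n1 n2 n3 n4 n5 n6 : ℕ)
    (h1 : 0 < n1) (h2 : 0 < n2) (h3 : 0 < n3) (h4 : 0 < n4) (h5 : 0 < n5) (h6 : 0 < n6)
    (P1 : Set (Fin n1 → ZMod 3)) (P2 : Set (Fin n2 → ZMod 3)) (P3 : Set (Fin n3 → ZMod 3))
    (P4 : Set (Fin n4 → ZMod 3)) (P5 : Set (Fin n5 → ZMod 3)) (P6 : Set (Fin n6 → ZMod 3))
    (hP1 : IsCompletePSet P1) (hP1b : IsBSaturated P1)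
    (hP2 : IsCompletePSet P2) (hP2b : IsBSaturated P2)
    (hP3 : IsCompletePSet P3) (hP3b : IsBSaturated P3)
    (hP4 : IsCompletePSet P4) (hP4b : IsBSaturated P4)
    (hP5 : IsCompletePSet P5) (hP5b : IsBSaturated P5)
    (hP6 : IsCompletePSet P6) (hP6b : IsBSaturated P6) :
    IsCompletePSet
      (concat6 P1 P2 P3 (Bset n4) (Bset n5) (Bset n6) ∪
       concat6 P1 P2 (Bset n3) (Bset n4) (Bset n5) P6 ∪
       concat6 P1 (Bset n2) P3 (Bset n4) P5 (Bset n6) ∪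
       concat6 (Bset n1) P2 P3 P4 (Bset n5) (Bset n6) ∪
       concat6 (Bset n1) (Bset n2) P3 P4 (Bset n5) P6 ∪
       concat6 (Bset n1) (Bset n2) P3 (Bset n4) P5 P6 ∪
       concat6 (Bset n1) P2 (Bset n3) P4 P5 (Bset n6) ∪
       concat6 (Bset n1) P2 (Bset n3) (Bset n4) P5 P6 ∪
       concat6 P1 (Bset n2) (Bset n3) P4 (Bset n5) P6 ∪
       concat6 P1 (Bset n2) (Bset n3) P4 P5 (Bset n6)) ∧
    IsBSaturated
      (concat6 P1 P2 P3 (Bset n4) (Bset n5) (Bset n6) ∪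
       concat6 P1 P2 (Bset n3) (Bset n4) (Bset n5) P6 ∪
       concat6 P1 (Bset n2) P3 (Bset n4) P5 (Bset n6) ∪
       concat6 (Bset n1) P2 P3 P4 (Bset n5) (Bset n6) ∪
       concat6 (Bset n1) (Bset n2) P3 P4 (Bset n5) P6 ∪
       concat6 (Bset n1) (Bset n2) P3 (Bset n4) P5 P6 ∪
       concat6 (Bset n1) P2 (Bset n3) P4 P5 (Bset n6) ∪
       concat6 (Bset n1) P2 (Bset n3) (Bset n4) P5 P6 ∪
       concat6 P1 (Bset n2) (Bset n3) P4 (Bset n5) P6 ∪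
       concat6 P1 (Bset n2) (Bset n3) P4 P5 (Bset n6)) := by
  have hn : ∀ j, 0 < ![n1, n2, n3, n4, n5, n6] j := by
    intro j; fin_cases j <;> assumption
  have hP : ∀ j, IsCompletePSet (sixFamily P1 P2 P3 P4 P5 P6 j) := by
    intro j; fin_cases j <;> assumption
  have hS : ∀ j, IsBSaturated (sixFamily P1 P2 P3 P4 P5 P6 j) := by
    intro j; fin_cases j <;> assumption
  convert And.intro
      (isCompletePSet_patternUnion (e := sixBlocks ..) isGluingPattern_sixPattern hn hP hS)
      (isBSaturated_patternUnion (e := sixBlocks ..) hS sixPattern) using 2 <;>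
  · ext x
    simp [patternUnion, sixPattern, patternProduct, patternFactor_sixFamily, mem_concat6_iff,
      or_assoc]
end

section
/- The set P_6^3 = {e_{i,1}, e_{i,2} : 1 ≤ i ≤ 6} ⊆ AG(6,3), where e_{i,b} is the vector whose i-th coordinate equals b ∈ {1,2} and whose other coordinates are 0, is a P_6-set of size 12. -/
/-- The ten 3-element index sets (0-indexed versions of the 1-indexed triples
`{1,2,3},{1,2,6},{1,3,5},{2,3,4},{3,4,6},{3,5,6},{2,4,5},{2,5,6},{1,4,6},{1,4,5}`). -/
def S6 : Set (Set (Fin 6)) :=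
  {{0, 1, 2}, {0, 1, 5}, {0, 2, 4}, {1, 2, 3}, {2, 3, 5},
   {2, 4, 5}, {1, 3, 4}, {1, 4, 5}, {0, 3, 5}, {0, 3, 4}}

/-- `P₆¹`: points of `AG(6,3)` vanishing exactly on one of the triples in `S6`. -/
def P61 : Set (Fin 6 → ZMod 3) := {a | zeroSet a ∈ S6}

/-- `P₆²`: the mirror inversion of `P₆¹` (image under coordinate reversal). -/
def P62 : Set (Fin 6 → ZMod 3) := (fun a => a ∘ Fin.rev) '' P61

/-- `e_{i,b}`: the vector with `i`-th coordinate `b` and all other coordinates `0`. -/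
def evec (i : Fin 6) (b : ZMod 3) : Fin 6 → ZMod 3 := fun j => if j = i then b else 0

/-- `P₆³ = {e_{i,1}, e_{i,2} : i}`. -/
def P63 : Set (Fin 6 → ZMod 3) := {x | ∃ i : Fin 6, x = evec i 1 ∨ x = evec i 2}

lemma evec_apply (i j : Fin 6) (b : ZMod 3) : evec i b j = if j = i then b else 0 := rfl

lemma aux1 : ∀ i j : Fin 6, ∃ k : Fin 6, k ≠ i ∧ k ≠ j := by decide

lemma aux2 (i j k : Fin 6) (b c d : ZMod 3) (hb : b ≠ 0) (hc : c ≠ 0) (hd : d ≠ 0)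
    (h1 : evec i b ≠ evec j c) (h2 : evec i b ≠ evec k d) (h3 : evec j c ≠ evec k d) :
    evec i b + evec j c + evec k d ≠ 0 := by
  intro h
  by_cases hij : i = j
  · subst hij
    by_cases hik : i = k
    · subst hik
      have e1 : b ≠ c := fun e => h1 (by rw [e])
      have e2 : b ≠ d := fun e => h2 (by rw [e])
      have e3 : c ≠ d := fun e => h3 (by rw [e])
      clear h h1 h2 h3
      revert b c d; decide
    · have := congrFun h k
      simp only [Pi.add_apply, Pi.zero_apply, evec_apply,
        if_neg (fun e : k = i => hik e.symm), if_pos rfl, zero_add, add_zero] at this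
      exact hd this
  · by_cases hik : i = k
    · have := congrFun h j
      rw [← hik] at this
      simp only [Pi.add_apply, Pi.zero_apply, evec_apply,
        if_neg (fun e : j = i => hij e.symm), if_pos rfl, zero_add, add_zero] at this
      exact hc this
    · have := congrFun h i
      simp only [Pi.add_apply, Pi.zero_apply, evec_apply, if_pos rfl,
        if_neg (fun e : i = j => hij e), if_neg (fun e : i = k => hik e),
        zero_add, add_zero] at this
      exact hb this

/-- A finset version of `P63`. -/
def P63f : Finset (Fin 6 → ZMod 3) :=
  Finset.univ.image (fun i => evec i 1) ∪ Finset.univ.image (fun i => evec i 2)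

lemma P63eq : P63 = ↑P63f := by
  ext x
  simp only [P63, P63f, Set.mem_setOf_eq, Finset.coe_union, Finset.coe_image,
    Finset.coe_univ, Set.image_univ, Set.mem_union, Set.mem_range]
  constructor
  · rintro ⟨i, h | h⟩
    · exact Or.inl ⟨i, h.symm⟩
    · exact Or.inr ⟨i, h.symm⟩
  · rintro (⟨i, h⟩ | ⟨i, h⟩)
    exacts [⟨i, Or.inl h.symm⟩, ⟨i, Or.inr h.symm⟩]

lemma mem_P63 {x : Fin 6 → ZMod 3} (hx : x ∈ P63) :
    ∃ i : Fin 6, ∃ b : ZMod 3, b ≠ 0 ∧ x = evec i b := by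
  obtain ⟨i, h | h⟩ := hx
  exacts [⟨i, 1, by decide, h⟩, ⟨i, 2, by decide, h⟩]

/-- `P₆³` is a `P₆`-set of size 12. -/
theorem P63_isPSet_card : IsPSet P63 ∧ P63.ncard = 12 := by
  refine ⟨⟨?_, ?_⟩, ?_⟩
  · intro a ha b hb hab
    obtain ⟨i, x, hx, rfl⟩ := mem_P63 ha
    obtain ⟨j, y, hy, rfl⟩ := mem_P63 hb
    obtain ⟨k, hki, hkj⟩ := aux1 i j
    exact ⟨k, by rw [evec_apply, if_neg hki], by rw [evec_apply, if_neg hkj]⟩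
  · intro a ha b hb c hc hab hac hbc
    obtain ⟨i, x, hx, rfl⟩ := mem_P63 ha
    obtain ⟨j, y, hy, rfl⟩ := mem_P63 hb
    obtain ⟨k, z, hz, rfl⟩ := mem_P63 hc
    exact aux2 i j k x y z hx hy hz hab hac hbc
  · rw [P63eq, Set.ncard_coe_finset]
    decide
end
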